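/- arXiv:2310.09299 — 2 statements merged into one kernel-verified Lean document; each statement's English description precedes it below -/
import Mathlib

section
/- Let S be a finite state space, P a stochastic matrix on S, τ : S → ℝ strictly positive, and 0 < τ₀ ≤ min_s τ(s). Let P̄ be the transformed matrix with P̄(s,s') = (τ₀/τ(s))·P(s,s') for s ≠ s' and P̄(s,s) = (τ₀/τ(s))·P(s,s) + (1 − τ₀/τ(s)). If ω̄ : S → ℝ is a probability vector that is stationary for P̄ (i.e., ω̄(s) = ∑_{s₀} ω̄(s₀)·P̄(s₀,s) for all s), then the vector ω defined by ω(s) = ω̄(s)/τ(s) divided by the normalizing constant ∑_{s'} ω̄(s')/τ(s') is a probability vector that is stationary for P. -/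
/-- Stationary distributions transfer from the uniformized chain back to the embedded chain. -/
theorem stmt_1 {S : Type*} [Fintype S] [DecidableEq S] [Nonempty S]
    (P : S → S → ℝ) (hP0 : ∀ s s', 0 ≤ P s s') (hP1 : ∀ s, ∑ s', P s s' = 1)
    (τ : S → ℝ) (hτ : ∀ s, 0 < τ s)
    (τ₀ : ℝ) (hτ₀ : 0 < τ₀) (hτ₀le : ∀ s, τ₀ ≤ τ s)
    (Pbar : S → S → ℝ)
    (hPbar : ∀ s s', Pbar s s' =
      τ₀ / τ s * P s s' + (if s = s' then 1 - τ₀ / τ s else 0))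
    (ωbar : S → ℝ) (hω0 : ∀ s, 0 ≤ ωbar s) (hω1 : ∑ s, ωbar s = 1)
    (hstat : ∀ s, ωbar s = ∑ s₀, ωbar s₀ * Pbar s₀ s)
    (ω : S → ℝ)
    (hωdef : ∀ s, ω s = (ωbar s / τ s) / ∑ s', ωbar s' / τ s') :
    (∀ s, 0 ≤ ω s) ∧ (∑ s, ω s = 1) ∧ (∀ s, ω s = ∑ s₀, ω s₀ * P s₀ s) := by
  set Z : ℝ := ∑ s', ωbar s' / τ s' with hZ
  have hfnn : ∀ s, 0 ≤ ωbar s / τ s := fun s => div_nonneg (hω0 s) (hτ s).le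
  have hZpos : 0 < Z := by
    by_contra h
    push_neg at h
    have hZ0 : Z = 0 := le_antisymm h (Finset.sum_nonneg fun s _ => hfnn s)
    have hall : ∀ s ∈ Finset.univ, ωbar s / τ s = 0 :=
      (Finset.sum_eq_zero_iff_of_nonneg fun s _ => hfnn s).mp hZ0
    have : ∑ s, ωbar s = 0 := by
      apply Finset.sum_eq_zero
      intro s _
      have := hall s (Finset.mem_univ s)
      have hτne : τ s ≠ 0 := (hτ s).ne'
      field_simp at this
      simpa using this
    rw [hω1] at this; norm_num at this
  -- key stationarity identity for f s = ωbar s / τ s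
  have hkey : ∀ s, ωbar s / τ s = ∑ s₀, (ωbar s₀ / τ s₀) * P s₀ s := by
    intro s
    have h1 : ωbar s = τ₀ * (∑ s₀, (ωbar s₀ / τ s₀) * P s₀ s) + ωbar s * (1 - τ₀ / τ s) := by
      calc ωbar s = ∑ s₀, ωbar s₀ * Pbar s₀ s := hstat s
        _ = ∑ s₀, (τ₀ * ((ωbar s₀ / τ s₀) * P s₀ s)
              + (if s₀ = s then ωbar s₀ * (1 - τ₀ / τ s₀) else 0)) := by
            apply Finset.sum_congr rfl
            intro s₀ _
            rw [hPbar]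
            have hτne : τ s₀ ≠ 0 := (hτ s₀).ne'
            by_cases h : s₀ = s <;> simp [h] <;> field_simp <;> ring
        _ = τ₀ * (∑ s₀, (ωbar s₀ / τ s₀) * P s₀ s) + ωbar s * (1 - τ₀ / τ s) := by
            rw [Finset.sum_add_distrib, ← Finset.mul_sum, Finset.sum_ite_eq' Finset.univ s]
            simp
    have hτne : τ s ≠ 0 := (hτ s).ne'
    have h2 : τ₀ * (ωbar s / τ s) = τ₀ * (∑ s₀, (ωbar s₀ / τ s₀) * P s₀ s) := by
      have : ωbar s - ωbar s * (1 - τ₀ / τ s) = τ₀ * (ωbar s / τ s) := by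
        field_simp; ring
      linarith [h1, this]
    exact mul_left_cancel₀ hτ₀.ne' h2
  refine ⟨fun s => ?_, ?_, fun s => ?_⟩
  · rw [hωdef]; exact div_nonneg (hfnn s) hZpos.le
  · have : ∑ s, ω s = (∑ s, ωbar s / τ s) / Z := by
      rw [Finset.sum_div]; exact Finset.sum_congr rfl fun s _ => hωdef s
    rw [this, ← hZ, div_self hZpos.ne']
  · rw [hωdef, hkey s, Finset.sum_div]
    apply Finset.sum_congr rfl
    intro s₀ _
    rw [hωdef s₀]
    ring
end

section
/- Let S be a finite state space, P a stochastic matrix on S, τ : S → ℝ strictly positive (the physical sojourn times), and let P̄ be the transformed matrix built with a constant τ₀ with 0 < τ₀ ≤ min τ. If ω is a stationary probability vector for P and we set ω̄(s) = τ(s)·ω(s)/γ with γ = ∑_{s'} τ(s')·ω(s'), then ω̄ is a probability vector stationary for P̄. -/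
/-- Converse stationary-distribution correspondence: from the embedded chain P
to the uniformized chain P̄. -/
theorem stmt_3 {S : Type*} [Fintype S] [DecidableEq S] [Nonempty S]
    (P : S → S → ℝ) (hP0 : ∀ s s', 0 ≤ P s s') (hP1 : ∀ s, ∑ s', P s s' = 1)
    (τ : S → ℝ) (hτ : ∀ s, 0 < τ s)
    (τ₀ : ℝ) (hτ₀ : 0 < τ₀) (hτ₀le : ∀ s, τ₀ ≤ τ s)
    (Pbar : S → S → ℝ)
    (hPbar : ∀ s s', Pbar s s' =
      τ₀ / τ s * P s s' + (if s = s' then 1 - τ₀ / τ s else 0))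
    (ω : S → ℝ) (hω0 : ∀ s, 0 ≤ ω s) (hω1 : ∑ s, ω s = 1)
    (hstat : ∀ s, ω s = ∑ s₀, ω s₀ * P s₀ s)
    (γ : ℝ) (hγ : γ = ∑ s', τ s' * ω s')
    (ωbar : S → ℝ) (hωbar : ∀ s, ωbar s = τ s * ω s / γ) :
    (∀ s, 0 ≤ ωbar s) ∧ (∑ s, ωbar s = 1) ∧
      (∀ s, ωbar s = ∑ s₀, ωbar s₀ * Pbar s₀ s) := by
  have hγpos : 0 < γ := by
    rw [hγ]
    have hex : ∃ s, 0 < ω s := by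
      by_contra h
      push_neg at h
      have : ∑ s, ω s = 0 :=
        Finset.sum_eq_zero fun s _ => le_antisymm (h s) (hω0 s)
      simp [hω1] at this
    obtain ⟨s, hs⟩ := hex
    have : 0 < τ s * ω s := mul_pos (hτ s) hs
    refine lt_of_lt_of_le this ?_
    exact Finset.single_le_sum (fun i _ => mul_nonneg (hτ i).le (hω0 i))
      (Finset.mem_univ s)
  refine ⟨fun s => ?_, ?_, fun s => ?_⟩
  · rw [hωbar]
    exact div_nonneg (mul_nonneg (hτ s).le (hω0 s)) hγpos.le
  · simp only [hωbar, div_eq_mul_inv, ← Finset.sum_mul]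
    rw [← hγ, mul_inv_cancel₀ hγpos.ne']
  · have key : ∀ s₀, ωbar s₀ * Pbar s₀ s =
        τ₀ / γ * (ω s₀ * P s₀ s) +
          (if s₀ = s then τ s * ω s / γ - τ₀ * ω s / γ else 0) := by
      intro s₀
      rw [hωbar, hPbar]
      rcases eq_or_ne s₀ s with rfl | hne
      · simp only [if_pos rfl, ↓reduceIte]
        field_simp [(hτ s₀).ne', hγpos.ne']
      · simp only [if_neg hne]
        field_simp [(hτ s₀).ne', hγpos.ne']
        ring
    rw [Finset.sum_congr rfl fun s₀ _ => key s₀, Finset.sum_add_distrib,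
      Finset.sum_ite_eq' Finset.univ s
        (fun s₀ => τ s * ω s / γ - τ₀ * ω s / γ),
      if_pos (Finset.mem_univ s), ← Finset.mul_sum, ← hstat, hωbar]
    field_simp [hγpos.ne']
    ring
end
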